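/- arXiv:0902.4400 — 2 statements merged into one kernel-verified Lean document; each statement's English description precedes it below -/
import Mathlib

section
/- If a curve r : ℝ → ℝ³ and p := -W(r)·ṙ·(1+|ṙ|²)^{-1/2} satisfy the Euler–Lagrange equation dp/dτ = -∇W(r)·(1+|ṙ|²)^{1/2}, then the energy E(τ) = (W(r(τ))² - |p(τ)|²)^{1/2} is constant in τ. -/
open scoped RealInnerProductSpace

/-- If r : ℝ → ℝ³ and p := -W(r)·ṙ·(1+|ṙ|²)^{-1/2} satisfy the
Euler–Lagrange equation dp/dτ = -∇W(r)·(1+|ṙ|²)^{1/2}, then the energy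
E(τ) = (W(r(τ))² - |p(τ)|²)^{1/2} is constant. -/
theorem free_particle_energy_conservation
    (W : EuclideanSpace ℝ (Fin 3) → ℝ) (hW : ContDiff ℝ (⊤ : ℕ∞) W)
    (hWneg : ∀ x, W x < 0)
    (r : ℝ → EuclideanSpace ℝ (Fin 3)) (hr : ContDiff ℝ (⊤ : ℕ∞) r)
    (p : ℝ → EuclideanSpace ℝ (Fin 3))
    (hp : ∀ τ, p τ =
      (-(W (r τ)) / Real.sqrt (1 + ‖deriv r τ‖ ^ 2)) • deriv r τ)
    (hEL : ∀ τ, HasDerivAt p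
      (-(Real.sqrt (1 + ‖deriv r τ‖ ^ 2)) • gradient W (r τ)) τ) :
    ∀ τ₁ τ₂ : ℝ,
      Real.sqrt ((W (r τ₁)) ^ 2 - ‖p τ₁‖ ^ 2)
        = Real.sqrt ((W (r τ₂)) ^ 2 - ‖p τ₂‖ ^ 2) := by
  set f : ℝ → ℝ := fun τ => (W (r τ)) ^ 2 - ⟪p τ, p τ⟫ with hf
  have hderiv : ∀ τ, HasDerivAt f 0 τ := by
    intro τ
    have hrd : HasDerivAt r (deriv r τ) τ := (hr.differentiable (by simp) τ).hasDerivAt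
    have hgrad : HasGradientAt W (gradient W (r τ)) (r τ) :=
      (hW.differentiable (by simp) (r τ)).hasGradientAt
    have hWr : HasDerivAt (fun τ => W (r τ)) (⟪gradient W (r τ), deriv r τ⟫) τ := by
      have := hgrad.hasFDerivAt.comp_hasDerivAt τ hrd
      exact this
    have hW2 : HasDerivAt (fun τ => (W (r τ)) ^ 2)
        (2 * W (r τ) * ⟪gradient W (r τ), deriv r τ⟫) τ := by
      exact (hWr.pow 2).congr_deriv (by norm_num)
    have hpp : HasDerivAt (fun τ => ⟪p τ, p τ⟫)
        (⟪p τ, -(Real.sqrt (1 + ‖deriv r τ‖ ^ 2)) • gradient W (r τ)⟫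
          + ⟪-(Real.sqrt (1 + ‖deriv r τ‖ ^ 2)) • gradient W (r τ), p τ⟫) τ :=
      (hEL τ).inner ℝ (hEL τ)
    have hs : Real.sqrt (1 + ‖deriv r τ‖ ^ 2) ≠ 0 := by
      positivity
    have key : ⟪p τ, -(Real.sqrt (1 + ‖deriv r τ‖ ^ 2)) • gradient W (r τ)⟫
          + ⟪-(Real.sqrt (1 + ‖deriv r τ‖ ^ 2)) • gradient W (r τ), p τ⟫
        = 2 * W (r τ) * ⟪gradient W (r τ), deriv r τ⟫ := by
      rw [hp τ]
      rw [real_inner_smul_left, real_inner_smul_right, real_inner_smul_left,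
        real_inner_smul_right, real_inner_comm (deriv r τ)]
      field_simp
      ring
    have := hW2.sub hpp
    rw [hf]
    exact this.congr_deriv (by rw [key]; ring)
  have hconst : ∀ τ₁ τ₂, f τ₁ = f τ₂ := fun τ₁ τ₂ =>
    is_const_of_deriv_eq_zero (fun x => (hderiv x).differentiableAt)
      (fun x => (hderiv x).deriv) τ₁ τ₂
  intro τ₁ τ₂
  have h := hconst τ₁ τ₂
  have hnorm : ∀ τ, ⟪p τ, p τ⟫ = ‖p τ‖ ^ 2 := fun τ => real_inner_self_eq_norm_sq _
  rw [hf] at h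
  simp only [hnorm] at h
  rw [h]
end

section
/- If a smooth function W̄ : ℝ → ℝ (evaluated along the trajectory) and velocity u : ℝ → ℝ³ with |u| < 1 satisfy d(-W̄u)/dt = -∇W̄ together with the chain rule dW̄/dt = ⟨∇W̄, u⟩, then -W̄(t)·(1-|u(t)|²)^{1/2} is constant in t; hence -W̄ = m₀(1-u²)^{-1/2} with m₀ = -W̄|_{u=0}. -/
open scoped RealInnerProductSpace

/-- If W̄(t) := W(r(t)) and u = dr/dt with |u| < 1 satisfy
d(-W̄u)/dt = -∇W̄, then -W̄·(1-|u|²)^{1/2} is constant, equal to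
m₀ = -W̄|_{u=0}; hence -W̄ = m₀(1-u²)^{-1/2}. -/
theorem vacuum_field_mass_velocity_relation
    (W : EuclideanSpace ℝ (Fin 3) → ℝ) (hW : ContDiff ℝ (⊤ : ℕ∞) W)
    (r : ℝ → EuclideanSpace ℝ (Fin 3)) (hr : ContDiff ℝ (⊤ : ℕ∞) r)
    (hu_lt : ∀ t, ‖deriv r t‖ < 1)
    (hode : ∀ t, HasDerivAt
        (fun t' => (-(W (r t'))) • deriv r t')
        (-(gradient W (r t))) t) :
    ∃ m₀ : ℝ,
      (∀ t, (-(W (r t))) * Real.sqrt (1 - ‖deriv r t‖ ^ 2) = m₀) ∧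
      (∀ t, deriv r t = 0 → -(W (r t)) = m₀) ∧
      (∀ t, -(W (r t)) = m₀ / Real.sqrt (1 - ‖deriv r t‖ ^ 2)) := by
  set u := deriv r with hu_def
  have hrdiff : Differentiable ℝ r := hr.differentiable (by simp)
  have hr2 : ContDiff ℝ ((⊤:ℕ∞):WithTop ℕ∞) r := hr.of_le (by simp)
  have hu_diff : Differentiable ℝ u :=
    (contDiff_infty_iff_deriv.mp hr2).2.differentiable (by simp)
  set f : ℝ → ℝ := fun t => -(W (r t)) with hf_def
  set g : ℝ → ℝ := fun t => f t * Real.sqrt (1 - ‖u t‖ ^ 2) with hg_def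
  have hpos : ∀ t, 0 < 1 - ‖u t‖ ^ 2 := fun t => by
    nlinarith [hu_lt t, norm_nonneg (u t)]
  have hsq : ∀ t, (1 : ℝ) - ‖u t‖ ^ 2 = 1 - ⟪u t, u t⟫ := fun t => by
    rw [real_inner_self_eq_norm_sq]
  -- derivative of f
  have hfder : ∀ t, HasDerivAt f (-⟪gradient W (r t), u t⟫) t := by
    intro t
    have hWg : HasGradientAt W (gradient W (r t)) (r t) :=
      (hW.differentiable (by simp) (r t)).hasGradientAt
    have := hWg.hasFDerivAt.comp_hasDerivAt t (hrdiff t).hasDerivAt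
    have h2 := this.neg
    simp only [InnerProductSpace.toDual_apply_apply] at h2
    exact h2
  -- key relation
  have hkey : ∀ t, -⟪gradient W (r t), u t⟫ * ⟪u t, u t⟫
      + f t * ⟪deriv u t, u t⟫ = -⟪gradient W (r t), u t⟫ := by
    intro t
    have hprod : HasDerivAt (fun t' => f t' • u t')
        (f t • deriv u t + (-⟪gradient W (r t), u t⟫) • u t) t :=
      (hfder t).smul (hu_diff t).hasDerivAt
    have heq : f t • deriv u t + (-⟪gradient W (r t), u t⟫) • u t
        = -(gradient W (r t)) := hprod.unique (hode t)
    have h2 : ⟪f t • deriv u t + (-⟪gradient W (r t), u t⟫) • u t, u t⟫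
        = ⟪-(gradient W (r t)), u t⟫ := by rw [heq]
    rw [inner_add_left, real_inner_smul_left, real_inner_smul_left,
      inner_neg_left] at h2
    linarith
  -- g has derivative 0
  have hg0 : ∀ t, HasDerivAt g 0 t := by
    intro t
    have hq : HasDerivAt (fun t' => (1 : ℝ) - ⟪u t', u t'⟫)
        (0 - (⟪u t, deriv u t⟫ + ⟪deriv u t, u t⟫)) t :=
      (hasDerivAt_const t 1).sub (((hu_diff t).hasDerivAt).inner ℝ (hu_diff t).hasDerivAt)
    have hq' : HasDerivAt (fun t' => (1 : ℝ) - ‖u t'‖ ^ 2)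
        (-(⟪u t, deriv u t⟫ + ⟪deriv u t, u t⟫)) t := by
      simpa only [zero_sub, ← hsq] using hq
    have hs : HasDerivAt (fun t' => Real.sqrt (1 - ‖u t'‖ ^ 2))
        (1 / (2 * Real.sqrt (1 - ‖u t‖ ^ 2)) * (-(⟪u t, deriv u t⟫ + ⟪deriv u t, u t⟫))) t :=
      (Real.hasDerivAt_sqrt (ne_of_gt (hpos t))).comp t hq'
    have hD : HasDerivAt g
        ((-⟪gradient W (r t), u t⟫) * Real.sqrt (1 - ‖u t‖ ^ 2)
          + f t * (1 / (2 * Real.sqrt (1 - ‖u t‖ ^ 2)) * (-(⟪u t, deriv u t⟫ + ⟪deriv u t, u t⟫)))) t :=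
      (hfder t).mul hs
    convert hD using 1
    have hsqrt_pos : 0 < Real.sqrt (1 - ‖u t‖ ^ 2) := Real.sqrt_pos.mpr (hpos t)
    have hsqrt_sq : Real.sqrt (1 - ‖u t‖ ^ 2) ^ 2 = 1 - ‖u t‖ ^ 2 :=
      Real.sq_sqrt (le_of_lt (hpos t))
    have hk := hkey t
    have hsym : ⟪u t, deriv u t⟫ = ⟪deriv u t, u t⟫ := real_inner_comm _ _
    have hq2 : ⟪u t, u t⟫ = ‖u t‖ ^ 2 := by linarith [hsq t]
    rw [hsym]
    set a := ⟪gradient W (r t), u t⟫ with ha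
    set b := ⟪deriv u t, u t⟫ with hb
    set s := Real.sqrt (1 - ‖u t‖ ^ 2) with hs'
    rw [hq2] at hk
    have hfb : f t * b = -a * s ^ 2 := by
      rw [hsqrt_sq]; linear_combination hk
    have hrw : f t * (1 / (2 * s) * -(b + b)) = -(f t * b) / s := by
      field_simp; ring
    rw [hrw, hfb]
    field_simp
    ring
  have hgdiff : Differentiable ℝ g := fun t => (hg0 t).differentiableAt
  have hgconst : ∀ t, g t = g 0 := fun t =>
    is_const_of_deriv_eq_zero hgdiff (fun x => (hg0 x).deriv) t 0
  refine ⟨g 0, fun t => hgconst t, ?_, ?_⟩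
  · intro t ht
    have h := hgconst t
    rw [hg_def] at h
    simp only [ht, norm_zero] at h
    simpa using h
  · intro t
    have hsqrt_pos : 0 < Real.sqrt (1 - ‖u t‖ ^ 2) := Real.sqrt_pos.mpr (hpos t)
    rw [eq_div_iff (ne_of_gt hsqrt_pos)]
    exact hgconst t
end
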